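/- Let k ≥ 1 and let x_1, …, x_k be a finite sequence of tasks (transit blocks or charging slots) assigned to a single bus, where each task x_i has a start time start_i, an end time end_i with start_i ≤ end_i, an origin location origin_i, and a destination location dest_i, and the tasks are indexed in order of start time. Let D be a nonnegative travel-time function on locations satisfying the triangle inequality D(a, c) ≤ D(a, b) + D(b, c) for all locations a, b, c, and suppose that for every task x_i the travel time between its own endpoints is dominated by its duration, i.e. D(origin_i, dest_i) ≤ end_i − start_i. If the feasibility constraint end_i + D(dest_i, origin_{i+1}) ≤ start_{i+1} holds for every pair of consecutive tasks (x_i, x_{i+1}) with 1 ≤ i < k, then it holds for every pair of tasks: for all indices i < j, end_i + D(dest_i, origin_j) ≤ start_j. -/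
import Mathlib


/-- If the feasibility constraint holds for every pair of
consecutive tasks assigned to a bus, it holds for every pair of tasks.
Tasks `x_1, …, x_k` are modeled by functions on `Fin k` giving start time,
end time, origin and destination; `D` is a nonnegative travel-time function
on locations satisfying the triangle inequality; each task's duration
dominates the direct travel time between its own endpoints; tasks are
indexed in order of start time. -/
theorem consecutive_feasibility_implies_pairwise_feasibility
    {L : Type*} (D : L → L → ℝ)
    (hD_nonneg : ∀ a b : L, 0 ≤ D a b)
    (hD_tri : ∀ a b c : L, D a c ≤ D a b + D b c)
    (k : ℕ) (hk : 1 ≤ k)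
    (tstart tend : Fin k → ℝ) (origin dest : Fin k → L)
    (h_dur : ∀ i : Fin k, tstart i ≤ tend i)
    (h_sorted : ∀ i j : Fin k, i ≤ j → tstart i ≤ tstart j)
    (h_dom : ∀ i : Fin k, D (origin i) (dest i) ≤ tend i - tstart i)
    (h_consec : ∀ i : Fin k, ∀ h : i.val + 1 < k,
      tend i + D (dest i) (origin ⟨i.val + 1, h⟩) ≤ tstart ⟨i.val + 1, h⟩) :
    ∀ i j : Fin k, i < j → tend i + D (dest i) (origin j) ≤ tstart j := by
  have main : ∀ n : ℕ, ∀ i j : Fin k, j.val = n → i < j →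
      tend i + D (dest i) (origin j) ≤ tstart j := by
    intro n
    induction n using Nat.strong_induction_on with
    | _ n ih =>
      intro i j hjn hij
      have hij' : i.val < j.val := hij
      rcases eq_or_lt_of_le (Nat.succ_le_of_lt hij') with heq | hlt
      · -- consecutive
        have h1 : i.val + 1 < k := by omega
        have : j = ⟨i.val + 1, h1⟩ := Fin.ext (by simp; omega)
        subst this
        exact h_consec i h1
      · -- go through j-1
        have hj1 : j.val - 1 < k := lt_of_le_of_lt (Nat.sub_le _ _) j.isLt
        have hm : (⟨j.val - 1, hj1⟩ : Fin k).val = j.val - 1 := rfl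
        obtain ⟨m, hmv⟩ : ∃ m : Fin k, m.val = j.val - 1 := ⟨⟨j.val - 1, hj1⟩, rfl⟩
        have him : i < m := by
          show i.val < m.val; omega
        have hIH : tend i + D (dest i) (origin m) ≤ tstart m := by
          exact ih m.val (by omega) i m rfl him
        have hcons : tend m + D (dest m) (origin j) ≤ tstart j := by
          have h2 : m.val + 1 < k := by omega
          have : j = ⟨m.val + 1, h2⟩ := Fin.ext (by simp; omega)
          rw [this]
          exact h_consec m h2
        have htri : D (dest i) (origin j) ≤
            D (dest i) (origin m) + D (origin m) (dest m) + D (dest m) (origin j) := by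
          calc D (dest i) (origin j) ≤ D (dest i) (dest m) + D (dest m) (origin j) :=
                hD_tri _ _ _
            _ ≤ (D (dest i) (origin m) + D (origin m) (dest m)) + D (dest m) (origin j) := by
                have := hD_tri (dest i) (origin m) (dest m)
                linarith
        have hdomm := h_dom m
        linarith
  intro i j hij
  exact main j.val i j rfl hij
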